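/- arXiv:1203.5448 — 2 statements merged into one kernel-verified Lean document; each statement's English description precedes it below -/
import Mathlib

section
/- Suppose K ⊆ ℝ^d is a continuum contained in a (closed) unit cube Q such that K has a point on each of two opposite faces of Q. Then for every positive integer N there exist N pairwise non-overlapping cubes Q₁, …, Q_N of edge length 1/N such that for each i ∈ {1, …, N} there is a continuum K_i ⊆ K ∩ Q_i having a point on each of two opposite faces of Q_i. -/
/-- The axis-parallel closed cube in `ℝ^d` with "lower" corner `c` and edge length `ℓ`. -/
def cube {d : ℕ} (c : EuclideanSpace ℝ (Fin d)) (ℓ : ℝ) : Set (EuclideanSpace ℝ (Fin d)) :=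
  {x | ∀ i, x i ∈ Set.Icc (c i) (c i + ℓ)}

/-- `K` has a point on each of two opposite faces of the cube with corner `c` and edge
length `ℓ`: for some coordinate direction `j`, `K` contains a point with `j`-th coordinate
`c j` and a point with `j`-th coordinate `c j + ℓ`. -/
def SpansCube {d : ℕ} (c : EuclideanSpace ℝ (Fin d)) (ℓ : ℝ)
    (K : Set (EuclideanSpace ℝ (Fin d))) : Prop :=
  ∃ j : Fin d, (∃ x ∈ K, x j = c j) ∧ (∃ y ∈ K, y j = c j + ℓ)

/-!
If a continuum `C` crosses the region `a ≤ f ≤ b` of a continuous function, then some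
subcontinuum of `C ∩ f⁻¹ [a, b]` meets both levels `f = a` and `f = b`. This is boundary
bumping: in the compact Hausdorff space `C ∩ f⁻¹ (-∞, b]` components are intersections of
clopen sets, so a component missing the level `b` lies in a clopen set missing it, and that set
would disconnect `C`.

Cut `K` by the `N` slabs `c j + k / N ≤ x j ≤ c j + (k + 1) / N`, where `j` is the spanning
direction. Each piece is then cut in every other coordinate direction by the slab of width
`1 / N` starting at its minimum there, whenever it is wider than that. Every cut yields a
continuum spanning its slab, so the final piece fits in a cube of side `1 / N`, spans it in the
direction of the last cut, and still has the `j`-th coordinate range of the `k`-th slab;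
cubes in different slabs therefore do not overlap.
-/

open Set Function

section BoundaryBumping

variable {X : Type*} [TopologicalSpace X] [T2Space X]

theorem exists_isClopen_of_disjoint_connectedComponent [CompactSpace X] {x : X} {B : Set X}
    (hB : IsClosed B) (h : Disjoint (connectedComponent x) B) :
    ∃ U, IsClopen U ∧ x ∈ U ∧ Disjoint U B := by
  rw [connectedComponent_eq_iInter_isClopen, disjoint_iff_inter_eq_empty, inter_comm] at h
  obtain ⟨t, ht⟩ := hB.isCompact.elim_finite_subfamily_closed _ (fun U => U.2.1.isClosed) h
  refine ⟨⋂ U ∈ t, U.1, isClopen_biInter_finset fun U _ => U.2.1, mem_iInter₂.2 fun U _ => U.2.2,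
    ?_⟩
  rw [disjoint_iff_inter_eq_empty, inter_comm, ht]

variable {α : Type*} [LinearOrder α] [TopologicalSpace α] [OrderClosedTopology α]
  {C : Set X} {f : X → α}

theorem IsCompact.exists_isConnected_mapsTo_Iic (hC : IsCompact C) (hC' : IsPreconnected C)
    (hf : Continuous f) {b : α} {x : X} (hx : x ∈ C) (hxb : f x ≤ b) (hy : ∃ y ∈ C, b ≤ f y) :
    ∃ E ⊆ C, IsCompact E ∧ IsConnected E ∧ x ∈ E ∧ MapsTo f E (Iic b) ∧ ∃ p ∈ E, f p = b := by
  set S := C ∩ f ⁻¹' Iic b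
  have : CompactSpace S := isCompact_iff_compactSpace.1 (hC.inter_right (isClosed_Iic.preimage hf))
  have hfS : Continuous fun z : S => f z := hf.comp continuous_subtype_val
  suffices ∃ p ∈ connectedComponent (⟨x, hx, hxb⟩ : S), f p = b by
    obtain ⟨p, hp, hpb⟩ := this
    exact ⟨(↑) '' connectedComponent (⟨x, hx, hxb⟩ : S),
      (Subtype.coe_image_subset S _).trans inter_subset_left,
      isClosed_connectedComponent.isCompact.image continuous_subtype_val,
      isConnected_connectedComponent.image _ continuous_subtype_val.continuousOn,
      ⟨_, mem_connectedComponent, rfl⟩, fun _ ⟨z, _, hz⟩ => hz ▸ z.2.2, _, ⟨p, hp, rfl⟩, hpb⟩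
  by_contra! hcomp
  obtain ⟨U, hU, hxU, hUb⟩ := exists_isClopen_of_disjoint_connectedComponent
    (isClosed_eq hfS continuous_const) (disjoint_left.2 fun p hp hpb => hcomp p hp hpb)
  set F₁ : Set X := (↑) '' U
  set F₂ : Set X := (↑) '' Uᶜ ∪ C ∩ f ⁻¹' Ici b
  have hF₁ : IsClosed F₁ := (hU.isClosed.isCompact.image continuous_subtype_val).isClosed
  have hF₂ : IsClosed F₂ :=
    (hU.compl.isClosed.isCompact.image continuous_subtype_val).isClosed.union
      (hC.isClosed.inter (isClosed_Ici.preimage hf))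
  have hcover : C ⊆ F₁ ∪ F₂ := by
    intro z hzC
    rcases le_total (f z) b with hzb | hbz
    · by_cases hzU : (⟨z, hzC, hzb⟩ : S) ∈ U
      exacts [Or.inl ⟨_, hzU, rfl⟩, Or.inr (Or.inl ⟨_, hzU, rfl⟩)]
    · exact Or.inr (Or.inr ⟨hzC, hbz⟩)
  obtain ⟨-, -, ⟨u, huU, rfl⟩, hu⟩ := isPreconnected_closed_iff.1 hC' F₁ F₂ hF₁ hF₂ hcover
    ⟨x, hx, _, hxU, rfl⟩ (hy.imp fun y hy => ⟨hy.1, Or.inr hy⟩)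
  rcases hu with ⟨v, hvU, hvu⟩ | ⟨-, hbu⟩
  · exact hvU (Subtype.ext hvu ▸ huU)
  · exact disjoint_left.1 hUb huU (le_antisymm u.2.2 hbu)

theorem IsCompact.exists_isConnected_mapsTo_Icc (hC : IsCompact C) (hC' : IsPreconnected C)
    (hf : Continuous f) {a b : α} (hab : a ≤ b) (hx : ∃ x ∈ C, f x ≤ a) (hy : ∃ y ∈ C, b ≤ f y) :
    ∃ E ⊆ C, IsCompact E ∧ IsConnected E ∧ MapsTo f E (Icc a b) ∧
      (∃ p ∈ E, f p = a) ∧ ∃ q ∈ E, f q = b := by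
  obtain ⟨x, hxC, hxa⟩ := hx
  obtain ⟨E₁, hE₁C, hE₁, hE₁', hxE₁, hE₁b, p, hpE₁, hpb⟩ :=
    hC.exists_isConnected_mapsTo_Iic hC' hf hxC (hxa.trans hab) hy
  obtain ⟨E, hEE₁, hE, hE', hpE, hEa, q, hqE, hqa⟩ :=
    hE₁.exists_isConnected_mapsTo_Iic hE₁'.isPreconnected (continuous_toDual.comp hf) hpE₁
      (show a ≤ f p from hpb ▸ hab) ⟨x, hxE₁, hxa⟩
  exact ⟨E, hEE₁.trans hE₁C, hE, hE', fun z hz => ⟨hEa hz, hE₁b (hEE₁ hz)⟩, ⟨q, hqE, hqa⟩,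
    ⟨p, hpE, hpb⟩⟩

end BoundaryBumping

section Boxes

variable {X ι : Type*} [TopologicalSpace X] [T2Space X]

def SpansBox (f : ι → X → ℝ) (q : ι → ℝ) (ℓ : ℝ) (E : Set X) : Prop :=
  ∃ i, (∃ x ∈ E, f i x = q i) ∧ ∃ y ∈ E, f i y = q i + ℓ

theorem exists_subcontinuum_in_box {f : ι → X → ℝ} (hf : ∀ i, Continuous (f i)) {ℓ : ℝ}
    (hℓ : 0 ≤ ℓ) (s : Finset ι) {q : ι → ℝ} {E : Set X} (hE : IsCompact E) (hE' : IsConnected E)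
    (hbox : ∀ i ∉ s, MapsTo (f i) E (Icc (q i) (q i + ℓ))) (hspan : SpansBox f q ℓ E) :
    ∃ q', (∀ i ∉ s, q' i = q i) ∧ ∃ E' ⊆ E, IsCompact E' ∧ IsConnected E' ∧
      (∀ i, MapsTo (f i) E' (Icc (q' i) (q' i + ℓ))) ∧ SpansBox f q' ℓ E' := by
  classical
  induction s using Finset.induction_on generalizing q E with
  | empty => exact ⟨q, fun _ _ => rfl, E, subset_rfl, hE, hE', fun i => hbox i (by simp), hspan⟩
  | insert k s hks ih =>
    obtain ⟨m, hmE, hmin⟩ := hE.exists_isMinOn hE'.nonempty (hf k).continuousOn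
    set q₁ := Function.update q k (f k m)
    have hq₁ : ∀ i ≠ k, q₁ i = q i := fun i hi => Function.update_of_ne hi _ _
    suffices ∃ E₁ ⊆ E, IsCompact E₁ ∧ IsConnected E₁ ∧
        MapsTo (f k) E₁ (Icc (f k m) (f k m + ℓ)) ∧ SpansBox f q₁ ℓ E₁ by
      obtain ⟨E₁, hE₁E, hE₁, hE₁', hE₁k, hspan₁⟩ := this
      have hbox₁ : ∀ i ∉ s, MapsTo (f i) E₁ (Icc (q₁ i) (q₁ i + ℓ)) := by
        intro i hi
        by_cases hik : i = k
        · subst hik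
          simpa [q₁] using hE₁k
        · rw [hq₁ i hik]
          exact (hbox i (by simp [hi, hik])).mono_left hE₁E
      obtain ⟨q', hq', E', hE'E₁, hE'⟩ := ih hE₁ hE₁' hbox₁ hspan₁
      refine ⟨q', fun i hi => ?_, E', hE'E₁.trans hE₁E, hE'⟩
      rw [Finset.mem_insert, not_or] at hi
      rw [hq' i hi.2, hq₁ i hi.1]
    by_cases hwide : ∃ y ∈ E, f k m + ℓ ≤ f k y
    · obtain ⟨E₁, hE₁E, hE₁, hE₁', hE₁k, ⟨p, hpE₁, hp⟩, r, hrE₁, hr⟩ :=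
        hE.exists_isConnected_mapsTo_Icc hE'.isPreconnected (hf k) (le_add_of_nonneg_right hℓ)
          ⟨m, hmE, le_rfl⟩ hwide
      exact ⟨E₁, hE₁E, hE₁, hE₁', hE₁k, k, ⟨p, hpE₁, by simpa [q₁] using hp⟩,
        ⟨r, hrE₁, by simpa [q₁] using hr⟩⟩
    · simp only [not_exists, not_and, not_le] at hwide
      refine ⟨E, subset_rfl, hE, hE', fun x hx => ⟨hmin hx, (hwide x hx).le⟩, ?_⟩
      obtain ⟨j, ⟨x, hx, hxj⟩, y, hy, hyj⟩ := hspan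
      -- `E` is narrower than `ℓ` in direction `k` but spans a slab of width `ℓ` in direction `j`.
      have hjk : j ≠ k := by
        rintro rfl
        linarith [hwide y hy, show f j m ≤ f j x from hmin hx]
      exact ⟨j, ⟨x, hx, by rw [hq₁ j hjk, hxj]⟩, y, hy, by rw [hq₁ j hjk, hyj]⟩

end Boxes

theorem exists_cube_spansCube_subcontinuum {d : ℕ} {K : Set (EuclideanSpace ℝ (Fin d))}
    (hK : IsCompact K) (hK' : IsConnected K) {j : Fin d} {a ℓ : ℝ} (hℓ : 0 ≤ ℓ)
    (hx : ∃ x ∈ K, x j ≤ a) (hy : ∃ y ∈ K, a + ℓ ≤ y j) :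
    ∃ q : EuclideanSpace ℝ (Fin d), q j = a ∧ ∃ E ⊆ K ∩ cube q ℓ,
      IsCompact E ∧ IsConnected E ∧ SpansCube q ℓ E := by
  obtain ⟨E, hEK, hE, hEconn, hEj, hEa, hEb⟩ := hK.exists_isConnected_mapsTo_Icc
    hK'.isPreconnected (PiLp.continuous_apply 2 _ j) (le_add_of_nonneg_right hℓ) hx hy
  obtain ⟨q, hq, E', hE'E, hE', hE'conn, hE'box, hE'span⟩ := exists_subcontinuum_in_box
    (fun i => PiLp.continuous_apply 2 _ i) hℓ {j}ᶜ (q := fun _ => a) hE hEconn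
    (by simpa using hEj) ⟨j, hEa, hEb⟩
  exact ⟨WithLp.toLp 2 q, hq j (by simp), E',
    subset_inter (hE'E.trans hEK) fun x hx i => hE'box i hx, hE', hE'conn, hE'span⟩

theorem pairwise_disjoint_Ioo_add_natCast_mul (a ℓ : ℝ) :
    Pairwise (Disjoint on fun k : ℕ => Ioo (a + k * ℓ) (a + k * ℓ + ℓ)) := fun k m hkm => by
  simpa [add_smul, add_assoc] using
    pairwise_disjoint_Ioo_add_zsmul a ℓ (Nat.cast_injective.ne hkm : (k : ℤ) ≠ m)

theorem interior_cube_subset {d : ℕ} (q : EuclideanSpace ℝ (Fin d)) (ℓ : ℝ) (j : Fin d) :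
    interior (cube q ℓ) ⊆ (· j) ⁻¹' Ioo (q j) (q j + ℓ) := by
  rw [← interior_Icc, (PiLp.isOpenMap_apply 2 _ j).preimage_interior_eq_interior_preimage
    (PiLp.continuous_apply 2 _ j)]
  exact interior_mono fun x hx => hx j

theorem continuum_subdivision_into_spanning_subcubes_general
    {d : ℕ} (c : EuclideanSpace ℝ (Fin d)) (K : Set (EuclideanSpace ℝ (Fin d)))
    (hKcomp : IsCompact K) (hKconn : IsConnected K)
    (hspan : SpansCube c 1 K)
    (N : ℕ) :
    ∃ q : Fin N → EuclideanSpace ℝ (Fin d),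
      (∀ i j, i ≠ j →
        Disjoint (interior (cube (q i) (1 / N))) (interior (cube (q j) (1 / N)))) ∧
      ∀ i, ∃ Ki : Set (EuclideanSpace ℝ (Fin d)),
        Ki ⊆ K ∩ cube (q i) (1 / N) ∧ IsCompact Ki ∧ IsConnected Ki ∧
        SpansCube (q i) (1 / N) Ki := by
  obtain ⟨j, ⟨x, hxK, hxj⟩, y, hyK, hyj⟩ := hspan
  set ℓ : ℝ := 1 / N
  have hℓ : 0 ≤ ℓ := by positivity
  have hslab (k : Fin N) : ∃ q : EuclideanSpace ℝ (Fin d), q j = c j + (k : ℕ) * ℓ ∧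
      ∃ E ⊆ K ∩ cube q ℓ, IsCompact E ∧ IsConnected E ∧ SpansCube q ℓ E := by
    refine exists_cube_spansCube_subcontinuum hKcomp hKconn hℓ ⟨x, hxK, ?_⟩ ⟨y, hyK, ?_⟩
    · exact hxj ▸ le_add_of_nonneg_right (by positivity)
    · have hkN : ((k : ℕ) + 1 : ℝ) ≤ N := by exact_mod_cast k.isLt
      have : ((k : ℕ) + 1 : ℝ) * ℓ ≤ 1 := calc
        _ ≤ N * ℓ := mul_le_mul_of_nonneg_right hkN hℓ
        _ = 1 := mul_one_div_cancel (Nat.cast_ne_zero.2 k.pos.ne')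
      linarith
  choose q hqj E hE hE' using hslab
  refine ⟨q, fun k m hkm => ?_, fun k => ⟨E k, hE k, hE' k⟩⟩
  have hsub (k : Fin N) := hqj k ▸ interior_cube_subset (q k) ℓ j
  exact ((pairwise_disjoint_Ioo_add_natCast_mul (c j) ℓ (Fin.val_injective.ne hkm)).preimage
    fun z : EuclideanSpace ℝ (Fin d) => z j).mono (hsub k) (hsub m)

/-- Suppose `K ⊆ ℝ^d` is a continuum contained in a closed unit cube `Q`, having a point
on each of two opposite faces of `Q`. Then for any positive integer `N` there are `N`
pairwise non-overlapping cubes of edge length `1/N`, each containing a subcontinuum of `K`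
having a point on each of two opposite faces of that cube. -/
theorem continuum_subdivision_into_spanning_subcubes
    {d : ℕ} (c : EuclideanSpace ℝ (Fin d)) (K : Set (EuclideanSpace ℝ (Fin d)))
    (hKcomp : IsCompact K) (hKconn : IsConnected K)
    (hKQ : K ⊆ cube c 1) (hspan : SpansCube c 1 K)
    (N : ℕ) (hN : 0 < N) :
    ∃ q : Fin N → EuclideanSpace ℝ (Fin d),
      (∀ i j, i ≠ j →
        Disjoint (interior (cube (q i) (1 / N))) (interior (cube (q j) (1 / N)))) ∧
      ∀ i, ∃ Ki : Set (EuclideanSpace ℝ (Fin d)),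
        Ki ⊆ K ∩ cube (q i) (1 / N) ∧ IsCompact Ki ∧ IsConnected Ki ∧
        SpansCube (q i) (1 / N) Ki :=
  continuum_subdivision_into_spanning_subcubes_general c K hKcomp hKconn hspan N
end

section
/- Let x ∈ ℝ^d and for each n ≥ 1 let A_n ⊆ ℝ^d be a set contained in the closed ball of radius 2^{-n} centered at x, such that each A_n is covered by a rectifiable curve of length at most 2^{-n}. Then there exists a single rectifiable curve covering ⋃_{n≥1} A_n. -/
/-!
Reparametrize the curve covering `A n` by arclength and rescale it to a Lipschitz map on
`[0, 1]` with constant of order `2⁻ⁿ`; since `A n` lies within `2⁻ⁿ` of `x`, joining the endpoints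
of this curve to `x` by segments gives a loop at `x` with a constant of the same order. Running
through the `n`-th loop during `[2⁻⁽ⁿ⁺¹⁾, 2⁻ⁿ]` gives a single map on `[0, 1]`: the compression of
time by `2ⁿ⁺¹` is exactly compensated by the decay of the constants, so it is Lipschitz, and a
Lipschitz curve has finite length.
-/

open Set
open scoped NNReal

section LipschitzOnReal

variable {E : Type*} [PseudoEMetricSpace E] {K : ℝ≥0} {f : ℝ → E}

lemma lipschitzOnWith_of_le {s : Set ℝ}
    (h : ∀ u ∈ s, ∀ v ∈ s, u ≤ v → edist (f u) (f v) ≤ K * edist u v) :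
    LipschitzOnWith K f s := by
  intro u hu v hv
  rcases le_total u v with huv | hvu
  · exact h u hu v hv huv
  · rw [edist_comm, edist_comm u]
    exact h v hv u hu hvu

lemma edist_add_edist_of_le {a b c : ℝ} (hab : a ≤ b) (hbc : b ≤ c) :
    edist a b + edist b c = edist a c := by
  rw [edist_dist, edist_dist, edist_dist, ← ENNReal.ofReal_add dist_nonneg dist_nonneg,
    Real.dist_eq, Real.dist_eq, Real.dist_eq, abs_of_nonpos (by linarith),
    abs_of_nonpos (by linarith), abs_of_nonpos (by linarith)]
  ring_nf

lemma LipschitzOnWith.Icc_union_Icc {a b c : ℝ} (h₁ : LipschitzOnWith K f (Icc a b))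
    (h₂ : LipschitzOnWith K f (Icc b c)) : LipschitzOnWith K f (Icc a c) := by
  refine lipschitzOnWith_of_le fun u hu v hv huv => ?_
  rcases le_total v b with hvb | hbv
  · exact h₁ ⟨hu.1, huv.trans hvb⟩ ⟨hv.1, hvb⟩
  rcases le_total b u with hbu | hub
  · exact h₂ ⟨hbu, hu.2⟩ ⟨hbv, hv.2⟩
  calc edist (f u) (f v) ≤ edist (f u) (f b) + edist (f b) (f v) := edist_triangle _ _ _
    _ ≤ K * edist u b + K * edist b v :=
        add_le_add (h₁ ⟨hu.1, hub⟩ ⟨hu.1.trans hub, le_rfl⟩)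
          (h₂ ⟨le_rfl, hbv.trans hv.2⟩ ⟨hbv, hv.2⟩)
    _ = K * edist u v := by rw [← mul_add, edist_add_edist_of_le hub hbv]

lemma lipschitzOnWith_Icc_of_seq {a b : ℝ} (c : ℕ → ℝ) (hac : ∀ n, a ≤ c n)
    (hc : ∀ t, a < t → ∃ n, c n ≤ t) (hf : ∀ n, LipschitzOnWith K f (Icc (c n) b))
    (hfc : ∀ n, f (c n) = f a) : LipschitzOnWith K f (Icc a b) := by
  refine lipschitzOnWith_of_le fun u hu v hv huv => ?_
  rcases hu.1.eq_or_lt with rfl | hau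
  · rcases hv.1.eq_or_lt with rfl | hav
    · simp
    obtain ⟨n, hn⟩ := hc v hav
    calc edist (f a) (f v) = edist (f (c n)) (f v) := by rw [hfc]
      _ ≤ K * edist (c n) v := hf n ⟨le_rfl, hn.trans hv.2⟩ ⟨hn, hv.2⟩
      _ ≤ K * edist a v := by
          rw [edist_dist, edist_dist, Real.dist_eq a, abs_sub_comm,
            abs_of_nonneg (sub_nonneg.2 huv)]
          gcongr
          exact Real.dist_le_of_mem_Icc ⟨hac n, hn⟩ ⟨huv, le_rfl⟩
  · obtain ⟨n, hn⟩ := hc u hau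
    exact hf n ⟨hn, hu.2⟩ ⟨hn.trans huv, hv.2⟩

lemma lipschitzWith_mul_sub (c : ℝ≥0) (d : ℝ) : LipschitzWith c fun t : ℝ => c * t - d :=
  LipschitzWith.of_dist_le_mul fun s t => by
    rw [Real.dist_eq, Real.dist_eq, sub_sub_sub_cancel_right, ← mul_sub, abs_mul,
      NNReal.abs_eq]

lemma LipschitzOnWith.of_eqOn_comp_mul_sub {c : ℝ≥0} {d : ℝ} {g : ℝ → E} {s t : Set ℝ}
    (hg : LipschitzOnWith K g t)
    (hmaps : MapsTo (fun u => c * u - d) s t) (hf : EqOn f (fun u => g (c * u - d)) s) :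
    LipschitzOnWith (K * c) f s := fun u hu v hv => by
  rw [hf hu, hf hv]
  exact (hg.comp (lipschitzWith_mul_sub c d).lipschitzOnWith hmaps) hu hv

end LipschitzOnReal

section Concat

variable {E : Type*} {f g : ℝ → E}

noncomputable def curveConcat (f g : ℝ → E) (t : ℝ) : E :=
  if t ≤ 1 / 2 then f (2 * t) else g (2 * t - 1)

lemma curveConcat_zero : curveConcat f g 0 = f 0 := by
  simp [curveConcat]

lemma curveConcat_one : curveConcat f g 1 = g 1 := by
  norm_num [curveConcat]

lemma curveConcat_eqOn_left : EqOn (curveConcat f g) (fun t => f (2 * t)) (Iic (1 / 2)) :=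
  fun _ ht => if_pos ht

lemma curveConcat_eqOn_right (h : f 1 = g 0) :
    EqOn (curveConcat f g) (fun t => g (2 * t - 1)) (Ici (1 / 2)) := fun t ht => by
  rcases (mem_Ici.1 ht).eq_or_lt with rfl | ht
  · norm_num [curveConcat, h]
  · exact if_neg (not_le.2 ht)

lemma image_subset_curveConcat_left : f '' Icc 0 1 ⊆ curveConcat f g '' Icc 0 1 := by
  rintro _ ⟨u, hu, rfl⟩
  refine ⟨u / 2, ⟨by linarith [hu.1], by linarith [hu.2]⟩, ?_⟩
  rw [curveConcat_eqOn_left (show u / 2 ≤ 1 / 2 by linarith [hu.2])]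
  ring_nf

lemma image_subset_curveConcat_right (h : f 1 = g 0) :
    g '' Icc 0 1 ⊆ curveConcat f g '' Icc 0 1 := by
  rintro _ ⟨u, hu, rfl⟩
  refine ⟨(u + 1) / 2, ⟨by linarith [hu.1], by linarith [hu.2]⟩, ?_⟩
  rw [curveConcat_eqOn_right h (show 1 / 2 ≤ (u + 1) / 2 by linarith [hu.1])]
  ring_nf

lemma lipschitzOnWith_curveConcat [PseudoEMetricSpace E] {K : ℝ≥0}
    (hf : LipschitzOnWith K f (Icc 0 1)) (hg : LipschitzOnWith K g (Icc 0 1)) (h : f 1 = g 0) :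
    LipschitzOnWith (K * 2) (curveConcat f g) (Icc 0 1) := by
  have h₁ : LipschitzOnWith (K * 2) (curveConcat f g) (Icc 0 (1 / 2)) :=
    hf.of_eqOn_comp_mul_sub (c := 2) (d := 0)
      (fun t ht => ⟨by push_cast; linarith [ht.1], by push_cast; linarith [ht.2]⟩)
      (fun t ht => by simpa using curveConcat_eqOn_left (g := g) ht.2)
  have h₂ : LipschitzOnWith (K * 2) (curveConcat f g) (Icc (1 / 2) 1) :=
    hg.of_eqOn_comp_mul_sub (c := 2) (d := 1)
      (fun t ht => ⟨by push_cast; linarith [ht.1], by push_cast; linarith [ht.2]⟩)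
      ((curveConcat_eqOn_right h).mono Icc_subset_Ici_self)
  exact h₁.Icc_union_Icc h₂

end Concat

section DyadicConcat

lemma exists_half_pow_succ_lt {t : ℝ} (ht : 0 < t) : ∃ n : ℕ, (1 / 2 : ℝ) ^ (n + 1) < t :=
  let ⟨n, hn⟩ := exists_pow_lt_of_lt_one ht one_half_lt_one
  ⟨n, (pow_le_pow_of_le_one (by norm_num) (by norm_num) n.le_succ).trans_lt hn⟩

open Classical in
noncomputable def dyadicIndex (t : ℝ) : ℕ :=
  if ht : 0 < t then Nat.find (exists_half_pow_succ_lt ht) else 0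

lemma dyadicIndex_eq {t : ℝ} {n : ℕ} (h₁ : (1 / 2 : ℝ) ^ (n + 1) < t) (h₂ : t ≤ (1 / 2) ^ n) :
    dyadicIndex t = n := by
  classical
  have ht : 0 < t := (pow_pos (by norm_num) _).trans h₁
  rw [dyadicIndex, dif_pos ht, Nat.find_eq_iff]
  refine ⟨h₁, fun m hm hlt => hlt.not_ge (h₂.trans ?_)⟩
  exact pow_le_pow_of_le_one (by norm_num) (by norm_num) hm

lemma two_pow_mul_half_pow (n : ℕ) : (2 : ℝ) ^ n * (1 / 2) ^ n = 1 := by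
  rw [← mul_pow]; norm_num

variable {E : Type*} {x : E} {g : ℕ → ℝ → E}

noncomputable def dyadicConcat (x : E) (g : ℕ → ℝ → E) (t : ℝ) : E :=
  if 0 < t then g (dyadicIndex t) (2 ^ (dyadicIndex t + 1) * t - 1) else x

lemma dyadicConcat_zero : dyadicConcat x g 0 = x := if_neg (lt_irrefl 0)

lemma dyadicConcat_eqOn (h₀ : ∀ n, g n 0 = x) (h₁ : ∀ n, g n 1 = x) (n : ℕ) :
    EqOn (dyadicConcat x g) (fun t => g n (2 ^ (n + 1) * t - 1))
      (Icc ((1 / 2) ^ (n + 1)) ((1 / 2) ^ n)) := by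
  intro t ht
  have ht₀ : 0 < t := (pow_pos (by norm_num) _).trans_le ht.1
  simp only [dyadicConcat, if_pos ht₀]
  rcases ht.1.eq_or_lt with rfl | hlt
  · have hidx : dyadicIndex ((1 / 2 : ℝ) ^ (n + 1)) = n + 1 :=
      dyadicIndex_eq (pow_lt_pow_right_of_lt_one₀ (by norm_num) (by norm_num) (by omega)) le_rfl
    rw [hidx, pow_succ 2 (n + 1), mul_right_comm, two_pow_mul_half_pow]
    norm_num [h₀, h₁]
  · rw [dyadicIndex_eq hlt ht.2]

lemma image_subset_dyadicConcat (h₀ : ∀ n, g n 0 = x) (h₁ : ∀ n, g n 1 = x) (n : ℕ) :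
    g n '' Icc 0 1 ⊆ dyadicConcat x g '' Icc 0 1 := by
  rintro _ ⟨u, hu, rfl⟩
  have hmem : (1 / 2 : ℝ) ^ (n + 1) * (u + 1) ∈ Icc ((1 / 2) ^ (n + 1)) ((1 / 2) ^ n) := by
    refine ⟨le_mul_of_one_le_right (by positivity) (by linarith [hu.1]), ?_⟩
    calc (1 / 2 : ℝ) ^ (n + 1) * (u + 1) ≤ (1 / 2) ^ (n + 1) * 2 := by gcongr; linarith [hu.2]
      _ = (1 / 2) ^ n := by rw [pow_succ]; ring
  refine ⟨_, ⟨(by positivity : (0 : ℝ) ≤ (1 / 2) ^ (n + 1)).trans hmem.1,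
    hmem.2.trans (pow_le_one₀ (by norm_num) (by norm_num))⟩, ?_⟩
  rw [dyadicConcat_eqOn h₀ h₁ n hmem]
  dsimp only
  rw [← mul_assoc, two_pow_mul_half_pow]
  ring_nf

lemma dyadicConcat_half_pow_succ (h₀ : ∀ n, g n 0 = x) (h₁ : ∀ n, g n 1 = x) (n : ℕ) :
    dyadicConcat x g ((1 / 2) ^ (n + 1)) = x := by
  rw [dyadicConcat_eqOn h₀ h₁ n ⟨le_rfl, pow_le_pow_of_le_one (by norm_num) (by norm_num)
    n.le_succ⟩]
  dsimp only
  rw [two_pow_mul_half_pow, sub_self, h₀]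

variable [PseudoEMetricSpace E] {K : ℝ≥0}

lemma lipschitzOnWith_dyadicConcat_Icc
    (hg : ∀ n, LipschitzOnWith (K * (1 / 2) ^ n) (g n) (Icc 0 1))
    (h₀ : ∀ n, g n 0 = x) (h₁ : ∀ n, g n 1 = x) (n : ℕ) :
    LipschitzOnWith (2 * K) (dyadicConcat x g) (Icc ((1 / 2) ^ (n + 1)) ((1 / 2) ^ n)) := by
  have hK : K * (1 / 2) ^ n * 2 ^ (n + 1) = 2 * K := by
    rw [pow_succ, ← mul_assoc, mul_assoc K, ← mul_pow]
    norm_num [mul_comm]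
  rw [← hK]
  refine (hg n).of_eqOn_comp_mul_sub (d := 1) (fun t ht => ?_) (fun t ht => ?_)
  · have hlo := mul_le_mul_of_nonneg_left ht.1 (by positivity : (0 : ℝ) ≤ 2 ^ (n + 1))
    have hhi := mul_le_mul_of_nonneg_left ht.2 (by positivity : (0 : ℝ) ≤ 2 ^ (n + 1))
    rw [two_pow_mul_half_pow] at hlo
    rw [show (2 : ℝ) ^ (n + 1) * (1 / 2) ^ n = 2 by
      rw [pow_succ, mul_right_comm, two_pow_mul_half_pow, one_mul]] at hhi
    push_cast
    constructor <;> linarith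
  · simpa using dyadicConcat_eqOn h₀ h₁ n ht

lemma lipschitzOnWith_dyadicConcat (hg : ∀ n, LipschitzOnWith (K * (1 / 2) ^ n) (g n) (Icc 0 1))
    (h₀ : ∀ n, g n 0 = x) (h₁ : ∀ n, g n 1 = x) :
    LipschitzOnWith (2 * K) (dyadicConcat x g) (Icc 0 1) := by
  have htail (n : ℕ) :
      LipschitzOnWith (2 * K) (dyadicConcat x g) (Icc ((1 / 2) ^ (n + 1)) 1) := by
    induction n with
    | zero => simpa using lipschitzOnWith_dyadicConcat_Icc hg h₀ h₁ 0
    | succ n ih => exact (lipschitzOnWith_dyadicConcat_Icc hg h₀ h₁ (n + 1)).Icc_union_Icc ih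
  refine lipschitzOnWith_Icc_of_seq _ (fun n => by positivity)
    (fun t ht => ?_) htail (fun n => ?_)
  · obtain ⟨n, hn⟩ := exists_half_pow_succ_lt ht
    exact ⟨n, hn.le⟩
  · rw [dyadicConcat_half_pow_succ h₀ h₁, dyadicConcat_zero]

end DyadicConcat

section Reparametrization

variable {E : Type*} [PseudoEMetricSpace E]

lemma HasConstantSpeedOnWith.lipschitzOnWith {f : ℝ → E} {s : Set ℝ} {l : ℝ≥0}
    (h : HasConstantSpeedOnWith f s l) : LipschitzOnWith l f s :=
  lipschitzOnWith_of_le fun u hu v hv huv => calc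
    edist (f u) (f v) ≤ eVariationOn f (s ∩ Icc u v) :=
      eVariationOn.edist_le f ⟨hu, le_rfl, huv⟩ ⟨hv, huv, le_rfl⟩
    _ = l * edist u v := by
      rw [h hu hv, edist_dist, Real.dist_eq, abs_sub_comm, abs_of_nonneg (sub_nonneg.2 huv),
        ENNReal.ofReal_mul l.coe_nonneg, ENNReal.ofReal_coe_nnreal]

lemma BoundedVariationOn.continuousOn_variationOnFromTo {α : Type*} [LinearOrder α]
    [TopologicalSpace α] [OrderTopology α] {f : α → E} {s : Set α} (hf : BoundedVariationOn f s)
    (hcont : ContinuousOn f s) {a : α} (ha : a ∈ s) :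
    ContinuousOn (variationOnFromTo f s a) s := by
  intro x hx
  have hsplit : ∀ y ∈ s, variationOnFromTo f s a y = variationOnFromTo f s a x +
      ((eVariationOn f (s ∩ Icc x y)).toReal - (eVariationOn f (s ∩ Icc y x)).toReal) := by
    intro y hy
    rw [← variationOnFromTo.add hf.locallyBoundedVariationOn ha hx hy]
    rcases le_total x y with hxy | hyx
    · rw [variationOnFromTo.eq_of_le f s hxy, eVariationOn.subsingleton f
        ((subsingleton_Icc_of_ge hxy).anti inter_subset_right), ENNReal.toReal_zero, sub_zero]
    · rw [variationOnFromTo.eq_of_ge f s hyx, eVariationOn.subsingleton f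
        ((subsingleton_Icc_of_ge hyx).anti inter_subset_right), ENNReal.toReal_zero, zero_sub]
  have hright := (ENNReal.tendsto_toReal ENNReal.zero_ne_top).comp
    (hf.tendsto_eVariationOn_Icc_zero_right x ((hcont x hx).mono inter_subset_left))
  have hleft := (ENNReal.tendsto_toReal ENNReal.zero_ne_top).comp
    (hf.tendsto_eVariationOn_Icc_zero_left ((hcont x hx).mono inter_subset_left))
  have hlim := tendsto_const_nhds (x := variationOnFromTo f s a x) |>.add (hright.sub hleft)
  rw [ENNReal.toReal_zero, sub_zero, add_zero] at hlim
  exact hlim.congr' (eventually_nhdsWithin_of_forall fun y hy => (hsplit y hy).symm)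

lemma image_variationOnFromTo_Icc {f : ℝ → E} {a b : ℝ} (hab : a ≤ b)
    (hf : ContinuousOn f (Icc a b)) (hbv : BoundedVariationOn f (Icc a b)) :
    variationOnFromTo f (Icc a b) a '' Icc a b = Icc 0 (eVariationOn f (Icc a b)).toReal := by
  have ha : a ∈ Icc a b := ⟨le_rfl, hab⟩
  have hb : b ∈ Icc a b := ⟨hab, le_rfl⟩
  have hψa : variationOnFromTo f (Icc a b) a a = 0 := variationOnFromTo.self f _ a
  have hψb : variationOnFromTo f (Icc a b) a b = (eVariationOn f (Icc a b)).toReal := by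
    rw [variationOnFromTo.eq_of_le f _ hab, inter_self]
  rw [← hψa, ← hψb]
  refine (Subset.antisymm ?_ (intermediate_value_Icc hab
    (hbv.continuousOn_variationOnFromTo hf ha)))
  rintro _ ⟨c, hc, rfl⟩
  have hmono := variationOnFromTo.monotoneOn hbv.locallyBoundedVariationOn ha
  exact ⟨hmono ha hc hc.1, hmono hc hb hc.2⟩

lemma image_naturalParameterization {E : Type*} [EMetricSpace E] {α : Type*} [LinearOrder α]
    {f : α → E} {s : Set α} (hf : LocallyBoundedVariationOn f s) {a : α} (ha : a ∈ s) :
    naturalParameterization f s a '' (variationOnFromTo f s a '' s) = f '' s := by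
  rw [image_image]
  exact image_congr fun c hc => edist_eq_zero.1 (edist_naturalParameterization_eq_zero hf ha hc)

lemma exists_lipschitzOnWith_image_Icc_eq {E : Type*} [EMetricSpace E] {f : ℝ → E} {a b : ℝ}
    (hab : a ≤ b) (hf : ContinuousOn f (Icc a b)) (hbv : BoundedVariationOn f (Icc a b)) :
    ∃ γ : ℝ → E, LipschitzOnWith (eVariationOn f (Icc a b)).toNNReal γ (Icc 0 1) ∧
      γ '' Icc 0 1 = f '' Icc a b := by
  set V := (eVariationOn f (Icc a b)).toNNReal
  set p := naturalParameterization f (Icc a b) a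
  have himage : variationOnFromTo f (Icc a b) a '' Icc a b = Icc 0 (V : ℝ) :=
    image_variationOnFromTo_Icc hab hf hbv
  have hp : LipschitzOnWith 1 p (Icc 0 V) := by
    simpa [himage] using (has_unit_speed_naturalParameterization f
      hbv.locallyBoundedVariationOn ⟨le_rfl, hab⟩).lipschitzOnWith
  refine ⟨fun t => p (V * t), ?_, ?_⟩
  · simpa using hp.of_eqOn_comp_mul_sub (c := V) (d := 0)
      (fun t ht => by simpa using ⟨mul_nonneg V.2 ht.1, mul_le_of_le_one_right V.2 ht.2⟩)
      (fun t _ => by simp)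
  · have hscale : (fun t : ℝ => (V : ℝ) * t) '' Icc 0 1 = Icc 0 (V : ℝ) := by
      simpa using image_mul_left_Icc (a := (V : ℝ)) V.2 zero_le_one
    rw [← image_naturalParameterization hbv.locallyBoundedVariationOn ⟨le_rfl, hab⟩, himage,
      ← hscale, image_image]

end Reparametrization

lemma exists_loop_of_subset_image {E : Type*} [NormedAddCommGroup E] [NormedSpace ℝ E]
    {x : E} {S : Set E} {r K : ℝ≥0} {γ : ℝ → E} (hS : S ⊆ Metric.closedBall x r)
    (hγ : LipschitzOnWith K γ (Icc 0 1)) (hSγ : S ⊆ γ '' Icc 0 1) :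
    ∃ g : ℝ → E, LipschitzOnWith ((K + r) * 2 * 2) g (Icc 0 1) ∧ g 0 = x ∧ g 1 = x ∧
      S ⊆ g '' Icc 0 1 := by
  rcases S.eq_empty_or_nonempty with rfl | ⟨_, hy⟩
  · exact ⟨fun _ => x, (LipschitzWith.const x).lipschitzOnWith.weaken zero_le, rfl, rfl,
      empty_subset _⟩
  obtain ⟨u, hu, rfl⟩ := hSγ hy
  have hend : ∀ v ∈ Icc (0 : ℝ) 1, nndist x (γ v) ≤ K + r := fun v hv => by
    rw [← NNReal.coe_le_coe, coe_nndist, NNReal.coe_add]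
    calc dist x (γ v) ≤ dist x (γ u) + dist (γ u) (γ v) := dist_triangle _ _ _
      _ ≤ r + K * 1 := by
        gcongr
        · exact Metric.mem_closedBall'.1 (hS hy)
        · exact (hγ.dist_le_mul _ hu _ hv).trans
            (by gcongr; exact Real.dist_le_of_mem_Icc_01 hu hv)
      _ = K + r := by ring
  have hseg (y z : E) (h : nndist y z ≤ K + r) :
      LipschitzOnWith (K + r) (AffineMap.lineMap y z : ℝ → E) (Icc 0 1) :=
    ((lipschitzWith_lineMap y z).weaken h).lipschitzOnWith
  set back := curveConcat γ (AffineMap.lineMap (γ 1) x : ℝ → E) with hback_def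
  have hback : LipschitzOnWith ((K + r) * 2) back (Icc 0 1) :=
    lipschitzOnWith_curveConcat (hγ.weaken le_self_add)
      (hseg _ _ (nndist_comm x (γ 1) ▸ hend 1 ⟨zero_le_one, le_rfl⟩))
      (AffineMap.lineMap_apply_zero _ _).symm
  have hjoin : (AffineMap.lineMap x (γ 0) : ℝ → E) 1 = back 0 := by
    rw [AffineMap.lineMap_apply_one, hback_def, curveConcat_zero]
  refine ⟨curveConcat (AffineMap.lineMap x (γ 0)) back, lipschitzOnWith_curveConcat
      ((hseg _ _ (hend 0 ⟨le_rfl, zero_le_one⟩)).weaken (le_mul_of_one_le_right zero_le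
        one_le_two)) hback hjoin, ?_, ?_, ?_⟩
  · rw [curveConcat_zero, AffineMap.lineMap_apply_zero]
  · rw [curveConcat_one, hback_def, curveConcat_one, AffineMap.lineMap_apply_one]
  · exact hSγ.trans (image_subset_curveConcat_left.trans (image_subset_curveConcat_right hjoin))

/-- Let `x ∈ ℝ^d` and for each `n ≥ 1` let `A n` be contained in the closed ball of
radius `2^{-n}` centered at `x`, with `A n` covered by a rectifiable curve of length at
most `2^{-n}` (a continuous map on a compact interval whose total variation, i.e. length,
is at most `2^{-n}`). Then a single rectifiable curve covers `⋃_{n ≥ 1} A n`. -/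
theorem union_covered_by_rectifiable_curve
    {d : ℕ} (x : EuclideanSpace ℝ (Fin d)) (A : ℕ → Set (EuclideanSpace ℝ (Fin d)))
    (hball : ∀ n : ℕ, 1 ≤ n → A n ⊆ Metric.closedBall x ((1 / 2 : ℝ) ^ n))
    (hcurve : ∀ n : ℕ, 1 ≤ n →
      ∃ (a b : ℝ) (f : ℝ → EuclideanSpace ℝ (Fin d)), a ≤ b ∧
        ContinuousOn f (Set.Icc a b) ∧
        eVariationOn f (Set.Icc a b) ≤ ENNReal.ofReal ((1 / 2 : ℝ) ^ n) ∧
        A n ⊆ f '' Set.Icc a b) :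
    ∃ (a b : ℝ) (f : ℝ → EuclideanSpace ℝ (Fin d)), a ≤ b ∧
      ContinuousOn f (Set.Icc a b) ∧
      eVariationOn f (Set.Icc a b) < ⊤ ∧
      (⋃ n ∈ Set.Ici 1, A n) ⊆ f '' Set.Icc a b := by
  have hloop (n : ℕ) : ∃ g : ℝ → EuclideanSpace ℝ (Fin d),
      LipschitzOnWith (4 * (1 / 2) ^ n) g (Icc 0 1) ∧ g 0 = x ∧ g 1 = x ∧
        A (n + 1) ⊆ g '' Icc 0 1 := by
    obtain ⟨a, b, f, hab, hf, hvar, hA⟩ := hcurve (n + 1) le_add_self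
    obtain ⟨γ, hγ, hγf⟩ := exists_lipschitzOnWith_image_Icc_eq hab hf
      (ne_top_of_le_ne_top ENNReal.ofReal_ne_top hvar)
    have hV : (eVariationOn f (Icc a b)).toNNReal ≤ (1 / 2) ^ (n + 1) := by
      rw [← ENNReal.coe_le_coe, ENNReal.coe_toNNReal
        (ne_top_of_le_ne_top ENNReal.ofReal_ne_top hvar)]
      simpa using hvar
    obtain ⟨g, hg, hg0, hg1, hAg⟩ := exists_loop_of_subset_image (r := (1 / 2) ^ (n + 1))
      (by simpa using hball (n + 1) le_add_self) (hγ.weaken hV) (hγf ▸ hA)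
    refine ⟨g, hg.weaken (le_of_eq ?_), hg0, hg1, hAg⟩
    rw [pow_succ]
    ring
  choose g hg hg0 hg1 hAg using hloop
  have hF := lipschitzOnWith_dyadicConcat hg hg0 hg1
  refine ⟨0, 1, dyadicConcat x g, zero_le_one, hF.continuousOn, ?_, ?_⟩
  · simpa [BoundedVariationOn, lt_top_iff_ne_top] using
      hF.locallyBoundedVariationOn 0 1 ⟨le_rfl, zero_le_one⟩ ⟨zero_le_one, le_rfl⟩
  · simp only [mem_Ici, iUnion_subset_iff]
    intro n hn
    obtain ⟨m, rfl⟩ := Nat.exists_eq_add_of_le' hn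
    exact (hAg m).trans (image_subset_dyadicConcat hg0 hg1 m)
end
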